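/- Fix ε ∈ (0,1) and let n be a sufficiently large positive integer (depending on ε). Set t = ⌈2 ln(log₂ n)/(1 − ε)⌉. Suppose f₀(x), f₁(x), …, f_t(x) ∈ 𝔽₂[x] are polynomials of degree at most n that are pairwise coprime and have no irreducible factor of degree ≤ t. If g(x) ∈ 𝔽₂[x] has degree at most n, then there exists g₁(x) ∈ 𝔽₂[x] with deg g₁ ≤ n such that L₂(g − g₁) ≤ log₂ n and gcd(g₁, f_i) = 1 for some i ∈ {0, 1, …, t}. Furthermore, if deg g ≥ log₂ n, then one can take g₁ with deg g₁ = deg g. -/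

import Mathlib

open Polynomial Finset

/-! ### Auxiliary lemmas -/

lemma ZMod2.eq_one_of_ne_zero : ∀ x : ZMod 2, x ≠ 0 → x = 1 := by decide

lemma monic_of_ne_zero' {p : Polynomial (ZMod 2)} (hp : p ≠ 0) : p.Monic :=
  ZMod2.eq_one_of_ne_zero _ (leadingCoeff_ne_zero.2 hp)

instance : Subsingleton (Polynomial (ZMod 2))ˣ := by
  constructor
  intro u v
  ext
  obtain ⟨r, hr, hru⟩ := Polynomial.isUnit_iff.1 u.isUnit
  obtain ⟨s, hs, hsv⟩ := Polynomial.isUnit_iff.1 v.isUnit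
  have h1 : ∀ x : ZMod 2, IsUnit x → x = 1 := by decide
  rw [← hru, ← hsv, h1 r hr, h1 s hs]

/-- Every monic irreducible polynomial of degree `d` over `𝔽₂` divides `X^(2^d) - X`. -/
lemma irreducible_dvd_X_pow_sub_X (w : Polynomial (ZMod 2)) (hw : Irreducible w) (hm : w.Monic) :
    w ∣ X ^ (2 ^ w.natDegree) - X := by
  have : Fact (Irreducible w) := ⟨hw⟩
  let K := AdjoinRoot w
  have hw0 : w ≠ 0 := hw.ne_zero
  let pb := AdjoinRoot.powerBasis hw0
  have : Module.Finite (ZMod 2) K := .of_basis pb.basis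
  have : Fintype K := Module.fintypeOfFintype pb.basis
  have hcard : Fintype.card K = 2 ^ w.natDegree := by
    rw [Module.card_fintype pb.basis]
    simp [pb, AdjoinRoot.powerBasis_dim hw0, ZMod.card]
  have hroot : (aeval (AdjoinRoot.root w)) (X ^ (2 ^ w.natDegree) - X : Polynomial (ZMod 2)) = 0 := by
    simp only [map_sub, map_pow, aeval_X]
    rw [← hcard, FiniteField.pow_card, sub_self]
  have hmin : minpoly (ZMod 2) (AdjoinRoot.root w) = w := by
    rw [AdjoinRoot.minpoly_root hw0, hm.leadingCoeff]
    simp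
  have := minpoly.dvd (ZMod 2) (AdjoinRoot.root w) hroot
  rwa [hmin] at this

lemma sum_natDegree_le (S : Finset (Polynomial (ZMod 2))) (F : Polynomial (ZMod 2)) (hF : F ≠ 0)
    (hirr : ∀ w ∈ S, Irreducible w) (hdvd : ∀ w ∈ S, w ∣ F) :
    ∑ w ∈ S, w.natDegree ≤ F.natDegree := by
  have hprod : (∏ w ∈ S, w) ∣ F :=
    Finset.prod_primes_dvd F (fun w hw => (hirr w hw).prime) hdvd
  have h0 : ∀ w ∈ S, w ≠ 0 := fun w hw => (hirr w hw).ne_zero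
  calc ∑ w ∈ S, w.natDegree = (∏ w ∈ S, w).natDegree := (Polynomial.natDegree_prod _ _ h0).symm
    _ ≤ F.natDegree := Polynomial.natDegree_le_of_dvd hprod hF

/-- The number of irreducible polynomials of degree `d` over `𝔽₂` is at most `2^d / d`. -/
lemma count_irred (W : Finset (Polynomial (ZMod 2))) (hirr : ∀ w ∈ W, Irreducible w)
    (d : ℕ) (hd : 1 ≤ d) : (d : ℝ) * ((W.filter (fun w => w.natDegree = d)).card) ≤ 2 ^ d := by
  classical
  set S := W.filter (fun w => w.natDegree = d) with hS
  have hSirr : ∀ w ∈ S, Irreducible w := fun w hw => hirr w (Finset.mem_filter.1 hw).1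
  have hSdeg : ∀ w ∈ S, w.natDegree = d := fun w hw => (Finset.mem_filter.1 hw).2
  have hF0 : (X ^ (2^d) - X : Polynomial (ZMod 2)) ≠ 0 :=
    FiniteField.X_pow_card_sub_X_ne_zero _ (Nat.one_lt_two_pow (by omega))
  have hFdeg : (X ^ (2^d) - X : Polynomial (ZMod 2)).natDegree = 2 ^ d :=
    FiniteField.X_pow_card_sub_X_natDegree_eq _ (Nat.one_lt_two_pow (by omega))
  have hkey : ∑ w ∈ S, w.natDegree ≤ 2 ^ d := by
    rw [← hFdeg]
    apply sum_natDegree_le S _ hF0 hSirr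
    intro w hw
    have := irreducible_dvd_X_pow_sub_X w (hSirr w hw)
      (monic_of_ne_zero' (hSirr w hw).ne_zero)
    rwa [hSdeg w hw] at this
  have hsum : ∑ w ∈ S, w.natDegree = d * S.card := by
    rw [Finset.sum_congr rfl hSdeg, Finset.sum_const, smul_eq_mul, mul_comm]
  have : d * S.card ≤ 2 ^ d := by rw [← hsum]; exact hkey
  exact_mod_cast this

/-! ### The box of sparse polynomials -/

noncomputable def box2 (m : ℕ) : Finset (Polynomial (ZMod 2)) :=
  (Finset.range m).powerset.image (fun S => ∑ j ∈ S, X ^ j)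

lemma coeff_sumX (S : Finset ℕ) (a : ℕ) :
    (∑ j ∈ S, (X : Polynomial (ZMod 2)) ^ j).coeff a = if a ∈ S then 1 else 0 := by
  rw [Polynomial.finset_sum_coeff]
  simp only [Polynomial.coeff_X_pow]
  rw [Finset.sum_ite_eq S a (fun _ => (1 : ZMod 2))]

lemma support_sumX (S : Finset ℕ) :
    (∑ j ∈ S, (X : Polynomial (ZMod 2)) ^ j).support = S := by
  ext a
  rw [Polynomial.mem_support_iff, coeff_sumX]
  by_cases h : a ∈ S <;> simp [h]

lemma sumX_injective : Function.Injective (fun S => ∑ j ∈ S, (X : Polynomial (ZMod 2)) ^ j) := by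
  intro S T h
  have := congrArg Polynomial.support h
  simpa [support_sumX] using this

lemma card_box2 (m : ℕ) : (box2 m).card = 2 ^ m := by
  unfold box2
  rw [Finset.card_image_of_injective _ sumX_injective, Finset.card_powerset, Finset.card_range]

lemma mem_box2 {m : ℕ} {p : Polynomial (ZMod 2)} :
    p ∈ box2 m ↔ p.support ⊆ Finset.range m := by
  constructor
  · rintro hp
    obtain ⟨S, hS, rfl⟩ := Finset.mem_image.1 hp
    rw [support_sumX]
    exact Finset.mem_powerset.1 hS
  · intro h
    refine Finset.mem_image.2 ⟨p.support, Finset.mem_powerset.2 h, ?_⟩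
    ext a
    rw [coeff_sumX]
    by_cases ha : a ∈ p.support
    · have : p.coeff a ≠ 0 := Polynomial.mem_support_iff.1 ha
      rw [if_pos ha, ZMod2.eq_one_of_ne_zero _ this]
    · rw [if_neg ha, (Polynomial.notMem_support_iff).1 ha]

lemma card_le_of_dvd (k : ℕ) (g w : Polynomial (ZMod 2)) (hw : w.Monic)
    (A : Finset (Polynomial (ZMod 2))) (hA : A ⊆ box2 k) (hdvd : ∀ e ∈ A, w ∣ g + e) :
    A.card ≤ 2 ^ (k - w.natDegree) := by
  rcases A.eq_empty_or_nonempty with rfl | ⟨e₀, he₀⟩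
  · simp
  rw [← card_box2]
  set d := w.natDegree
  have key : ∀ e ∈ A, e - e₀ = w * ((e - e₀) /ₘ w) := by
    intro e he
    have h1 : w ∣ (e - e₀) := by
      have := dvd_sub (hdvd e he) (hdvd e₀ he₀)
      simpa using this
    have h2 := (Polynomial.modByMonic_eq_zero_iff_dvd hw).2 h1
    have h3 := Polynomial.modByMonic_add_div (e - e₀) w
    rw [h2, zero_add] at h3
    exact h3.symm
  apply Finset.card_le_card_of_injOn (fun e => (e - e₀) /ₘ w)
  · intro e he
    simp only [Finset.mem_coe]
    rw [mem_box2]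
    rcases eq_or_ne (e - e₀) 0 with h0 | h0
    · rw [h0, Polynomial.zero_divByMonic]
      simp
    · intro j hj
      have hsupp : (e - e₀).support ⊆ Finset.range k := by
        rw [sub_eq_add_neg]
        refine Polynomial.support_add.trans ?_
        rw [Polynomial.support_neg]
        apply Finset.union_subset
        · exact mem_box2.1 (hA he)
        · exact mem_box2.1 (hA he₀)
      have hdm : (e - e₀).natDegree < k := by
        have := hsupp (Polynomial.natDegree_mem_support_of_nonzero h0)
        simpa using this
      have hdle : d ≤ (e - e₀).natDegree := by
        apply Polynomial.natDegree_le_of_dvd _ h0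
        exact ⟨_, key e he⟩
      have hq : ((e - e₀) /ₘ w).natDegree = (e - e₀).natDegree - d :=
        Polynomial.natDegree_divByMonic _ hw
      have hjle : j ≤ ((e - e₀) /ₘ w).natDegree := Polynomial.le_natDegree_of_mem_supp j hj
      rw [Finset.mem_range]
      omega
  · intro e he e' he' hee
    have h1 := key e he
    have h2 := key e' he'
    simp only at hee
    rw [hee] at h1
    have : e - e₀ = e' - e₀ := by rw [h1, ← h2]
    exact sub_left_injective this

lemma harmonic_le_log (k : ℕ) (hk : 1 ≤ k) :
    ∑ d ∈ Finset.Icc 2 k, (1 / (d : ℝ)) ≤ Real.log k := by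
  induction k with
  | zero => omega
  | succ k ih =>
    rcases Nat.lt_or_ge k 1 with h | h
    · interval_cases k
      · simp
    · have hk1 : (1:ℝ) ≤ k := by exact_mod_cast h
      have step : (1 / ((k+1 : ℕ) : ℝ)) ≤ Real.log (k+1) - Real.log k := by
        have hkpos : (0:ℝ) < k := by linarith
        have hk1pos : (0:ℝ) < (k+1:ℝ) := by linarith
        rw [← Real.log_div (by linarith) (by positivity)]
        have h2 : Real.log ((k:ℝ) / (k+1)) ≤ (k:ℝ)/(k+1) - 1 :=
          Real.log_le_sub_one_of_pos (by positivity)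
        have h3 : Real.log ((k:ℝ)/(k+1)) = - Real.log ((k+1:ℝ)/k) := by
          rw [← Real.log_inv]
          congr 1
          field_simp
        have h4 : (k:ℝ)/(k+1) - 1 = -(1/(k+1)) := by field_simp; ring
        push_cast
        nlinarith [h2, h3, h4, Real.log_le_sub_one_of_pos (show (0:ℝ) < (k:ℝ)/(k+1) by positivity)]
      have hicc : Finset.Icc 2 (k+1) = insert (k+1) (Finset.Icc 2 k) := by
        ext x; simp [Nat.lt_succ_iff]; omega
      rw [hicc, Finset.sum_insert (by simp)]
      have := ih h
      push_cast at step ⊢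
      push_cast at this
      linarith
lemma core (t k n : ℕ) (ht1 : 1 ≤ t) (hk1 : 1 ≤ k)
    (hlog : Real.log k ≤ (t : ℝ) / 2) (hkt : 4 * (t + 1) ≤ k + 1) (hn : n < 2 ^ (k + 1))
    (f : Fin (t + 1) → Polynomial (ZMod 2))
    (hdeg : ∀ i, (f i).natDegree ≤ n)
    (hcop : ∀ i j, i ≠ j → IsCoprime (f i) (f j))
    (hsmall : ∀ i, ∀ w : Polynomial (ZMod 2), Irreducible w → w.natDegree ≤ t → ¬ w ∣ f i)
    (g : Polynomial (ZMod 2)) :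
    ∃ e ∈ box2 k, ∃ i, IsCoprime (g + e) (f i) := by
  classical
  by_contra hcon
  push_neg at hcon
  -- f i ≠ 0
  have hf0 : ∀ i, f i ≠ 0 := by
    intro i h
    exact hsmall i X Polynomial.irreducible_X (by simpa using ht1) (h ▸ dvd_zero X)
  -- existence of common irreducible factors
  have hex : ∀ i : Fin (t+1), ∀ e ∈ box2 k, ∃ w, Irreducible w ∧ w ∣ (g + e) ∧ w ∣ f i := by
    intro i e he
    have hnc := hcon e he i
    have hgcd0 : EuclideanDomain.gcd (g + e) (f i) ≠ 0 := by
      intro h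
      exact hf0 i (EuclideanDomain.gcd_eq_zero_iff.mp h).2
    have hgu : ¬ IsUnit (EuclideanDomain.gcd (g + e) (f i)) := by
      intro h
      exact hnc (EuclideanDomain.gcd_isUnit_iff.mp h)
    obtain ⟨w, hwi, hwd⟩ := WfDvdMonoid.exists_irreducible_factor hgu hgcd0
    exact ⟨w, hwi, hwd.trans (EuclideanDomain.gcd_dvd_left _ _),
      hwd.trans (EuclideanDomain.gcd_dvd_right _ _)⟩
  -- choice
  let φ : Fin (t+1) → Polynomial (ZMod 2) → Polynomial (ZMod 2) := fun i e =>
    if h : e ∈ box2 k then (hex i e h).choose else X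
  have hφ : ∀ i, ∀ e ∈ box2 k,
      Irreducible (φ i e) ∧ (φ i e) ∣ (g + e) ∧ (φ i e) ∣ f i := by
    intro i e he
    simp only [φ, dif_pos he]
    exact (hex i e he).choose_spec
  let W : Fin (t+1) → Finset (Polynomial (ZMod 2)) := fun i => (box2 k).image (φ i)
  have hWfacts : ∀ i, ∀ w ∈ W i, Irreducible w ∧ w ∣ f i ∧ t + 1 ≤ w.natDegree := by
    intro i w hw
    obtain ⟨e, he, rfl⟩ := Finset.mem_image.1 hw
    obtain ⟨h1, _, h3⟩ := hφ i e he
    refine ⟨h1, h3, ?_⟩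
    by_contra hle
    exact hsmall i _ h1 (by omega) h3
  -- per-i counting
  have hcount : ∀ i, 2 ^ k ≤ ∑ w ∈ W i, 2 ^ (k - w.natDegree) := by
    intro i
    rw [← card_box2 k,
      Finset.card_eq_sum_card_fiberwise (fun e he => Finset.mem_image_of_mem (φ i) he)]
    apply Finset.sum_le_sum
    intro w hw
    apply card_le_of_dvd k g w (monic_of_ne_zero' (hWfacts i w hw).1.ne_zero)
    · exact Finset.filter_subset _ _
    · intro e he
      obtain ⟨he1, he2⟩ := Finset.mem_filter.1 he
      have := (hφ i e he1).2.1
      rwa [he2] at this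
  -- disjointness
  have hdisj : Set.PairwiseDisjoint (↑(Finset.univ : Finset (Fin (t+1)))) W := by
    intro i _ j _ hij
    simp only [Function.onFun]
    rw [Finset.disjoint_left]
    intro w hwi hwj
    have h1 := hWfacts i w hwi
    have h2 := hWfacts j w hwj
    exact h1.1.not_isUnit ((hcop i j hij).isUnit_of_dvd' h1.2.1 h2.2.1)
  set WW := Finset.univ.biUnion W with hWW
  have hWWfacts : ∀ w ∈ WW, Irreducible w ∧ t + 1 ≤ w.natDegree := by
    intro w hw
    obtain ⟨i, _, hwi⟩ := Finset.mem_biUnion.1 hw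
    exact ⟨(hWfacts i w hwi).1, (hWfacts i w hwi).2.2⟩
  have htot : (t + 1) * 2 ^ k ≤ ∑ w ∈ WW, 2 ^ (k - w.natDegree) := by
    rw [hWW, Finset.sum_biUnion hdisj]
    calc (t+1) * 2^k = ∑ _i : Fin (t+1), 2^k := by simp [mul_comm]
      _ ≤ _ := Finset.sum_le_sum (fun i _ => hcount i)
  -- split small/big degree
  rw [← Finset.sum_filter_add_sum_filter_not WW (fun w => w.natDegree ≤ k)] at htot
  set WS := WW.filter (fun w => w.natDegree ≤ k) with hWS
  set WB := WW.filter (fun w => ¬ w.natDegree ≤ k) with hWB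
  -- big part is just card
  have hbig_eq : ∑ w ∈ WB, 2 ^ (k - w.natDegree) = WB.card := by
    rw [Finset.sum_congr rfl (fun w hw => ?_), Finset.sum_const, smul_eq_mul, mul_one]
    have := (Finset.mem_filter.1 hw).2
    have : k - w.natDegree = 0 := by omega
    rw [this, pow_zero]
  -- bound big part
  have hbig : (WB.card : ℝ) ≤ (t + 1) * (2 ^ (k+1) : ℝ) / (k + 1) := by
    have hsub : WB ⊆ Finset.univ.biUnion (fun i => (W i).filter (fun w => ¬ w.natDegree ≤ k)) := by
      intro w hw
      obtain ⟨hw1, hw2⟩ := Finset.mem_filter.1 hw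
      obtain ⟨i, hi, hwi⟩ := Finset.mem_biUnion.1 hw1
      exact Finset.mem_biUnion.2 ⟨i, hi, Finset.mem_filter.2 ⟨hwi, hw2⟩⟩
    have hc1 : WB.card ≤ ∑ i : Fin (t+1), ((W i).filter (fun w => ¬ w.natDegree ≤ k)).card :=
      (Finset.card_le_card hsub).trans (Finset.card_biUnion_le)
    have hc2 : ∀ i : Fin (t+1), (k+1) * ((W i).filter (fun w => ¬ w.natDegree ≤ k)).card ≤ n := by
      intro i
      have h1 : ∀ w ∈ (W i).filter (fun w => ¬ w.natDegree ≤ k), k + 1 ≤ w.natDegree := by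
        intro w hw
        have := (Finset.mem_filter.1 hw).2
        omega
      calc (k+1) * ((W i).filter (fun w => ¬ w.natDegree ≤ k)).card
          = ((W i).filter (fun w => ¬ w.natDegree ≤ k)).card * (k+1) := by ring
        _ ≤ ∑ w ∈ (W i).filter (fun w => ¬ w.natDegree ≤ k), w.natDegree :=
            Finset.card_nsmul_le_sum _ _ _ h1
        _ ≤ ∑ w ∈ W i, w.natDegree :=
            Finset.sum_le_sum_of_subset (Finset.filter_subset _ _)
        _ ≤ (f i).natDegree := sum_natDegree_le _ _ (hf0 i)
            (fun w hw => (hWfacts i w hw).1) (fun w hw => (hWfacts i w hw).2.1)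
        _ ≤ n := hdeg i
    have hk1R : (0:ℝ) < (k:ℝ) + 1 := by positivity
    have : (WB.card : ℝ) ≤ (t+1) * (n / (k+1)) := by
      have := hc1
      have hcc : ∀ i : Fin (t+1),
          (((W i).filter (fun w => ¬ w.natDegree ≤ k)).card : ℝ) ≤ n / (k+1) := by
        intro i
        rw [le_div_iff₀ hk1R]
        have h := hc2 i
        calc (((W i).filter (fun w => ¬ w.natDegree ≤ k)).card : ℝ) * ((k:ℝ)+1)
            = ((((W i).filter (fun w => ¬ w.natDegree ≤ k)).card * (k+1) : ℕ) : ℝ) := by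
              push_cast; ring
          _ ≤ (n:ℝ) := by exact_mod_cast (by rw [Nat.mul_comm]; exact h : ((W i).filter (fun w => ¬ w.natDegree ≤ k)).card * (k+1) ≤ n)
      calc (WB.card : ℝ) ≤ ∑ i : Fin (t+1), (((W i).filter (fun w => ¬ w.natDegree ≤ k)).card : ℝ) := by
            exact_mod_cast hc1
        _ ≤ ∑ _i : Fin (t+1), (n : ℝ) / (k+1) := Finset.sum_le_sum (fun i _ => hcc i)
        _ = (t+1) * ((n:ℝ)/(k+1)) := by simp [mul_comm]
    refine this.trans ?_
    have hnR : (n : ℝ) ≤ 2^(k+1) := by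
      have := hn.le
      exact_mod_cast this
    rw [mul_div_assoc]
    gcongr
  -- small part bound
  have hWSsub : WS ⊆ WW := Finset.filter_subset _ _
  have hWSirr : ∀ w ∈ WS, Irreducible w := fun w hw => (hWWfacts w (hWSsub hw)).1
  have hmaps : ∀ w ∈ WS, w.natDegree ∈ Finset.Icc (t+1) k := by
    intro w hw
    rw [Finset.mem_Icc]
    exact ⟨(hWWfacts w (hWSsub hw)).2, (Finset.mem_filter.1 hw).2⟩
  have hsmallR : ((∑ w ∈ WS, 2 ^ (k - w.natDegree) : ℕ) : ℝ) ≤ (2:ℝ)^k * ((t:ℝ)/2) := by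
    have hterm : ∀ w ∈ WS, ((2:ℝ)) ^ (k - w.natDegree) = (2:ℝ)^k / 2^(w.natDegree) := by
      intro w hw
      have hd : w.natDegree ≤ k := (Finset.mem_filter.1 hw).2
      rw [eq_div_iff (by positivity), ← pow_add, Nat.sub_add_cancel hd]
    calc ((∑ w ∈ WS, 2 ^ (k - w.natDegree) : ℕ) : ℝ)
        = ∑ w ∈ WS, ((2:ℝ)) ^ (k - w.natDegree) := by push_cast; rfl
      _ = ∑ w ∈ WS, (2:ℝ)^k / 2^(w.natDegree) := Finset.sum_congr rfl hterm
      _ = ∑ d ∈ Finset.Icc (t+1) k, ∑ w ∈ WS.filter (fun w => w.natDegree = d),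
            (2:ℝ)^k / 2^(w.natDegree) :=
          (Finset.sum_fiberwise_of_maps_to hmaps _).symm
      _ ≤ ∑ d ∈ Finset.Icc (t+1) k, (2:ℝ)^k * (1/d) := by
          apply Finset.sum_le_sum
          intro d hd
          have hd1 : 1 ≤ d := by
            have := (Finset.mem_Icc.1 hd).1
            omega
          have hdR : (0:ℝ) < d := by exact_mod_cast hd1
          have hci := count_irred WS hWSirr d hd1
          calc ∑ w ∈ WS.filter (fun w => w.natDegree = d), (2:ℝ)^k / 2^(w.natDegree)
              = ∑ w ∈ WS.filter (fun w => w.natDegree = d), (2:ℝ)^k / 2^d := by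
                apply Finset.sum_congr rfl
                intro w hw
                rw [(Finset.mem_filter.1 hw).2]
            _ = ((WS.filter (fun w => w.natDegree = d)).card : ℝ) * ((2:ℝ)^k / 2^d) := by
                rw [Finset.sum_const, nsmul_eq_mul]
            _ ≤ ((2:ℝ)^d / d) * ((2:ℝ)^k / 2^d) := by
                apply mul_le_mul_of_nonneg_right _ (by positivity)
                rw [div_eq_inv_mul] at *
                rw [← mul_le_mul_iff_right₀ hdR]
                calc (d:ℝ) * ((WS.filter (fun w => w.natDegree = d)).card : ℝ) ≤ 2^d := hci
                  _ = d * ((d:ℝ)⁻¹ * 2^d) := by field_simp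
            _ = (2:ℝ)^k * (1/d) := by
                field_simp
      _ = (2:ℝ)^k * ∑ d ∈ Finset.Icc (t+1) k, (1/(d:ℝ)) := by rw [Finset.mul_sum]
      _ ≤ (2:ℝ)^k * ∑ d ∈ Finset.Icc 2 k, (1/(d:ℝ)) := by
          apply mul_le_mul_of_nonneg_left _ (by positivity)
          apply Finset.sum_le_sum_of_subset_of_nonneg
          · apply Finset.Icc_subset_Icc_left
            omega
          · intro d _ _
            positivity
      _ ≤ (2:ℝ)^k * Real.log k := by
          apply mul_le_mul_of_nonneg_left (harmonic_le_log k hk1) (by positivity)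
      _ ≤ (2:ℝ)^k * ((t:ℝ)/2) := mul_le_mul_of_nonneg_left hlog (by positivity)
  -- final contradiction
  have htotR : ((t:ℝ)+1) * 2^k ≤
      ((∑ w ∈ WS, 2 ^ (k - w.natDegree) : ℕ) : ℝ) + (WB.card : ℝ) := by
    have := htot
    rw [hbig_eq] at this
    calc ((t:ℝ)+1) * 2^k = (((t+1) * 2^k : ℕ) : ℝ) := by push_cast; ring
      _ ≤ _ := by exact_mod_cast this
  have hquot : ((t:ℝ)+1) * (2:ℝ)^(k+1) / ((k:ℝ)+1) ≤ (2:ℝ)^k / 2 := by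
    have h4 : (4:ℝ) * ((t:ℝ)+1) ≤ (k:ℝ)+1 := by exact_mod_cast hkt
    have hkp : (0:ℝ) < (k:ℝ)+1 := by positivity
    rw [div_le_div_iff₀ hkp (by norm_num)]
    have hp : (0:ℝ) < (2:ℝ)^k := by positivity
    rw [pow_succ]
    nlinarith [hp]
  have hfinal : ((t:ℝ)+1) * 2^k ≤ (2:ℝ)^k * ((t:ℝ)/2) + (2:ℝ)^k / 2 := by
    have hb2 : (WB.card : ℝ) ≤ (2:ℝ)^k / 2 := by
      refine hbig.trans ?_
      rw [mul_div_assoc] at hquot ⊢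
      exact hquot
    linarith
  have hp : (0:ℝ) < (2:ℝ)^k := by positivity
  have ht0 : (0:ℝ) ≤ (t:ℝ) := by positivity
  nlinarith [hfinal, hp, ht0]

lemma eventually_log_le (c : ℝ) (hc : 0 < c) : ∀ᶠ y in Filter.atTop, Real.log y ≤ c * y := by
  have h := Real.isLittleO_log_id_atTop.def hc
  filter_upwards [h, Filter.eventually_ge_atTop (1:ℝ)] with y h1 h2
  have habs : ‖Real.log y‖ ≤ c * ‖y‖ := h1
  rw [Real.norm_eq_abs, Real.norm_eq_abs, abs_of_nonneg (by linarith : (0:ℝ) ≤ y)] at habs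
  calc Real.log y ≤ |Real.log y| := le_abs_self _
    _ ≤ c * y := habs

/-- The length of a polynomial over `𝔽₂`: the number of nonzero coefficients. -/
noncomputable def length2 (h : Polynomial (ZMod 2)) : ℕ :=
  h.support.card

theorem stmt_16 (ε : ℝ) (hε : ε ∈ Set.Ioo (0 : ℝ) 1) :
    ∃ N : ℕ, ∀ n : ℕ, N ≤ n →
      ∀ t : ℕ, t = ⌈2 * Real.log (Real.logb 2 n) / (1 - ε)⌉₊ →
        ∀ f : Fin (t + 1) → Polynomial (ZMod 2),
          (∀ i, (f i).natDegree ≤ n) →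
          (∀ i j, i ≠ j → IsCoprime (f i) (f j)) →
          (∀ i, ∀ w : Polynomial (ZMod 2), Irreducible w → w.natDegree ≤ t → ¬ w ∣ f i) →
          ∀ g : Polynomial (ZMod 2), g.natDegree ≤ n →
            (∃ g₁ : Polynomial (ZMod 2), g₁.natDegree ≤ n ∧
              (length2 (g - g₁) : ℝ) ≤ Real.logb 2 n ∧ ∃ i, IsCoprime g₁ (f i)) ∧
            (Real.logb 2 n ≤ (g.natDegree : ℝ) →
              ∃ g₁ : Polynomial (ZMod 2), g₁.natDegree = g.natDegree ∧
                (length2 (g - g₁) : ℝ) ≤ Real.logb 2 n ∧ ∃ i, IsCoprime g₁ (f i)) := by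
  obtain ⟨hε0, hε1⟩ := hε
  have h1ε : (0:ℝ) < 1 - ε := by linarith
  -- the eventual numerical condition
  have hevy : ∀ᶠ y in Filter.atTop, 8 / (1-ε) * Real.log y + 8 ≤ y := by
    filter_upwards [eventually_log_le ((1-ε)/16) (by positivity),
      Filter.eventually_ge_atTop (16:ℝ)] with y h1 h2
    have h3 : 8 / (1-ε) * Real.log y ≤ 8 / (1-ε) * ((1-ε)/16 * y) := by
      apply mul_le_mul_of_nonneg_left h1 (by positivity)
    have h4 : 8 / (1-ε) * ((1-ε)/16 * y) = y / 2 := by field_simp; ring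
    linarith
  have hlogbT : Filter.Tendsto (fun n : ℕ => Real.logb 2 (n:ℝ)) Filter.atTop Filter.atTop :=
    (Real.tendsto_logb_atTop (by norm_num : (1:ℝ) < 2)).comp tendsto_natCast_atTop_atTop
  have hev : ∀ᶠ n : ℕ in Filter.atTop,
      8 / (1-ε) * Real.log (Real.logb 2 n) + 8 ≤ Real.logb 2 n := hlogbT.eventually hevy
  obtain ⟨N, hN⟩ := Filter.eventually_atTop.1 (hev.and (Filter.eventually_ge_atTop 16))
  refine ⟨N, ?_⟩
  intro n hn t ht f hdeg hcop hsmall g hg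
  obtain ⟨hNcond, hn16⟩ := hN n hn
  -- basic numeric facts
  set k := Nat.log 2 n with hk
  have hn0 : n ≠ 0 := by omega
  have h2k : 2 ^ k ≤ n := Nat.pow_log_le_self 2 hn0
  have hnk : n < 2 ^ (k + 1) := Nat.lt_pow_succ_log_self (by norm_num) n
  have hk4 : 4 ≤ k := by
    rw [hk, Nat.le_log_iff_pow_le (by norm_num) hn0]
    omega
  have hnR : (0:ℝ) < (n:ℝ) := by exact_mod_cast Nat.pos_of_ne_zero hn0
  have hkle : (k:ℝ) ≤ Real.logb 2 n := by
    rw [Real.le_logb_iff_rpow_le (by norm_num : (1:ℝ) < 2) hnR, Real.rpow_natCast]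
    exact_mod_cast h2k
  have hklt : Real.logb 2 n < (k:ℝ) + 1 := by
    rw [Real.logb_lt_iff_lt_rpow (by norm_num : (1:ℝ) < 2) hnR]
    rw [show ((k:ℝ) + 1) = ((k+1 : ℕ) : ℝ) by push_cast; ring, Real.rpow_natCast]
    exact_mod_cast hnk
  have hy1 : (4:ℝ) ≤ Real.logb 2 n := le_trans (by exact_mod_cast hk4) hkle
  set x := Real.log (Real.logb 2 n) with hx
  have hx0 : 0 < x := Real.log_pos (by linarith)
  have ht1 : 1 ≤ t := by
    rw [ht]
    rw [Nat.one_le_iff_ne_zero, ← Nat.pos_iff_ne_zero, Nat.ceil_pos]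
    positivity
  have hceil : 2 * x / (1-ε) ≤ (t:ℝ) := by rw [ht]; exact Nat.le_ceil _
  have htlt : (t:ℝ) < 2 * x / (1-ε) + 1 := by
    rw [ht]; exact Nat.ceil_lt_add_one (by positivity)
  -- log k ≤ t / 2
  have hlogk : Real.log k ≤ (t:ℝ) / 2 := by
    have hkpos : (0:ℝ) < (k:ℝ) := by
      have : (0:ℕ) < k := by omega
      exact_mod_cast this
    have h1 : Real.log k ≤ x := Real.log_le_log hkpos hkle
    have h2 : 2 * x ≤ (t:ℝ) * (1-ε) := by
      rw [div_le_iff₀ h1ε] at hceil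
      linarith
    have htε : 0 ≤ (t:ℝ) * ε := by positivity
    nlinarith
  -- 4 * (t+1) ≤ k + 1
  have hkt : 4 * (t + 1) ≤ k + 1 := by
    have h1 : 4 * ((t:ℝ) + 1) < 8 * x / (1-ε) + 8 := by
      have : 8 * x / (1-ε) = 4 * (2 * x / (1-ε)) := by ring
      rw [this]
      linarith
    have h2 : 8 * x / (1-ε) + 8 ≤ Real.logb 2 n := by
      have : 8 * x / (1-ε) = 8 / (1-ε) * x := by ring
      rw [this]
      exact hNcond
    have h3 : 4 * ((t:ℝ) + 1) < (k:ℝ) + 1 := by linarith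
    have h4 : (4 * (t+1) : ℕ) < ((k:ℕ) + 1 : ℕ) := by exact_mod_cast h3
    omega
  -- apply the core lemma
  obtain ⟨e, he, i, hi⟩ := core t k n ht1 (by omega) hlogk hkt hnk f hdeg hcop hsmall g
  -- facts about e
  have hesupp : e.support ⊆ Finset.range k := mem_box2.1 he
  have hecard : (e.support.card : ℝ) ≤ Real.logb 2 n := by
    have h1 : e.support.card ≤ k := by
      have := Finset.card_le_card hesupp
      simpa using this
    calc (e.support.card : ℝ) ≤ (k:ℝ) := by exact_mod_cast h1
      _ ≤ _ := hkle
  have hedeg : e.natDegree < k := by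
    rcases eq_or_ne e 0 with rfl | h0
    · simpa using (by omega : 0 < k)
    · have := hesupp (Polynomial.natDegree_mem_support_of_nonzero h0)
      simpa using this
  have hlen : (length2 (g - (g + e)) : ℝ) ≤ Real.logb 2 n := by
    have heq : g - (g + e) = -e := by ring
    rw [heq]
    unfold length2
    rw [Polynomial.support_neg]
    exact hecard
  constructor
  · -- first part
    refine ⟨g + e, ?_, hlen, i, hi⟩
    have hkn : k ≤ n := le_trans (Nat.lt_two_pow_self (n := k)).le h2k
    exact le_trans (Polynomial.natDegree_add_le_of_le hg (le_trans hedeg.le hkn)) (by omega)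
  · -- second part
    intro hge
    refine ⟨g + e, ?_, hlen, i, hi⟩
    have hkg : (k:ℝ) ≤ (g.natDegree : ℝ) := le_trans hkle hge
    have hkg' : k ≤ g.natDegree := by exact_mod_cast hkg
    exact Polynomial.natDegree_add_eq_left_of_natDegree_lt (by omega)
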